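/- arXiv:2103.15172 — 8 statements merged into one kernel-verified Lean document; each statement's English description precedes it below -/
import Mathlib

section
/- A linear map φ : A → A satisfies φ([[a,b],c]) = [[φ(a),b],c] for all a, b, c ∈ A if and only if it satisfies φ([[a,b],c]) = [[a,φ(b)],c] for all a, b, c ∈ A. -/
/-- Lie bracket `[x,y] = xy - yx`. -/
def br {A : Type*} [Ring A] (x y : A) : A := x * y - y * x

/-- Double commutator `[[x,y],z]`. -/
def dbr {A : Type*} [Ring A] (x y z : A) : A := br (br x y) z

lemma dbr_swap {A : Type*} [Ring A] (x y z : A) : dbr x y z = -dbr y x z := by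
  simp only [dbr, br]; noncomm_ring

/-- φ([[a,b],c]) = [[φ(a),b],c] for all a,b,c iff φ([[a,b],c]) = [[a,φ(b)],c] for all a,b,c. -/
theorem stmt_3 {R A : Type*} [CommRing R] [Ring A] [Algebra R A]
    (φ : A →ₗ[R] A) :
    (∀ a b c : A, φ (dbr a b c) = dbr (φ a) b c) ↔
      (∀ a b c : A, φ (dbr a b c) = dbr a (φ b) c) := by
  constructor <;> intro h a b c
  · rw [dbr_swap a b c, map_neg, h b a c, ← dbr_swap]
  · rw [dbr_swap a b c, map_neg, h b a c, ← dbr_swap]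
end

section
/- Let A be a unital associative algebra with a nontrivial idempotent e, and let f = 1 − e. If φ : A → A is a Lie triple centralizer, then for all a ∈ A with a = eae, one has eφ(a)f = 0 and fφ(a)e = 0. -/
/-- If φ is a Lie triple centralizer on a unital algebra with nontrivial idempotent e and
f = 1 − e, then for every a ∈ eAe the off-diagonal corners of φ(a) vanish. -/
theorem stmt_8 {R A : Type*} [CommRing R] [Ring A] [Algebra R A]
    (e : A) (he : e * e = e) (he0 : e ≠ 0) (he1 : e ≠ 1)
    (f : A) (hf : f = 1 - e)
    (φ : A →ₗ[R] A) (hφ : ∀ x y z : A, φ (dbr x y z) = dbr (φ x) y z) :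
    ∀ a : A, a = e * a * e → e * φ a * f = 0 ∧ f * φ a * e = 0 := by
  intro a ha
  have hae : a * e = a := by
    conv_lhs => rw [ha]
    rw [mul_assoc (e * a) e e, he, ← ha]
  have hea : e * a = a := by
    conv_lhs => rw [ha]
    rw [← mul_assoc e (e * a) e, ← mul_assoc e e a, he, ← ha]
  have hd0 : dbr a e e = 0 := by
    simp [dbr, br, hae, hea]
  have key : dbr (φ a) e e = 0 := by
    rw [← hφ, hd0, map_zero]
  set p := φ a with hp
  have key2 : p * e + e * p - (e * p * e + e * p * e) = 0 := by
    have h := key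
    simp only [dbr, br, sub_mul, mul_sub, mul_assoc, he] at h
    simp only [← mul_assoc, he] at h
    rw [← h]
    noncomm_ring
  constructor
  · have h1 := congrArg (fun x => e * x) key2
    simp only [mul_zero, mul_sub, mul_add, ← mul_assoc, he] at h1
    rw [hf, mul_sub, mul_one]
    rw [← h1]
    noncomm_ring
  · have h2 := congrArg (fun x => x * e) key2
    simp only [zero_mul, sub_mul, add_mul, mul_assoc, he] at h2
    rw [hf, sub_mul, one_mul]
    rw [← h2]
    noncomm_ring
end

section
/- Let A be a unital associative algebra with a nontrivial idempotent e, f = 1 − e, and let φ : A → A be a Lie triple centralizer. Then for every a ∈ eAe and every b₁, b₂ ∈ fAf, one has [[fφ(a)f, b₁], b₂] = 0; that is, the fAf-component of φ(a) centralizes commutators of fAf in this triple sense. -/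
lemma corner_br {A : Type*} [Ring A] (f x b : A)
    (h1 : f * b = b) (h2 : b * f = b) :
    br (f * x * f) b = f * br x b * f := by
  unfold br
  simp only [mul_sub, sub_mul, mul_assoc, h1, h2]
  rw [← mul_assoc b f, h2, ← mul_assoc f b, h1]

lemma corner_dbr {A : Type*} [Ring A] (f x b₁ b₂ : A)
    (h1 : f * b₁ = b₁) (h2 : b₁ * f = b₁) (h3 : f * b₂ = b₂) (h4 : b₂ * f = b₂) :
    dbr (f * x * f) b₁ b₂ = f * dbr x b₁ b₂ * f := by
  unfold dbr
  rw [corner_br f x b₁ h1 h2, corner_br f (br x b₁) b₂ h3 h4]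

/-- For a Lie triple centralizer φ, a ∈ eAe and b₁, b₂ ∈ fAf,
one has [[fφ(a)f, b₁], b₂] = 0. -/
theorem stmt_9 {R A : Type*} [CommRing R] [Ring A] [Algebra R A]
    (e : A) (he : e * e = e) (he0 : e ≠ 0) (he1 : e ≠ 1)
    (f : A) (hf : f = 1 - e)
    (φ : A →ₗ[R] A) (hφ : ∀ x y z : A, φ (dbr x y z) = dbr (φ x) y z) :
    ∀ a b₁ b₂ : A, a = e * a * e → b₁ = f * b₁ * f → b₂ = f * b₂ * f →
      dbr (f * φ a * f) b₁ b₂ = 0 := by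
  intro a b₁ b₂ ha hb₁ hb₂
  have hff : f * f = f := by subst hf; noncomm_ring [he]
  have hef : e * f = 0 := by subst hf; noncomm_ring [he]
  have hfe : f * e = 0 := by subst hf; noncomm_ring [he]
  have h1 : f * b₁ = b₁ := by
    conv_lhs => rw [hb₁, ← mul_assoc, ← mul_assoc, hff]
    exact hb₁.symm
  have h2 : b₁ * f = b₁ := by
    conv_lhs => rw [hb₁, mul_assoc, hff]
    exact hb₁.symm
  have h3 : f * b₂ = b₂ := by
    conv_lhs => rw [hb₂, ← mul_assoc, ← mul_assoc, hff]
    exact hb₂.symm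
  have h4 : b₂ * f = b₂ := by
    conv_lhs => rw [hb₂, mul_assoc, hff]
    exact hb₂.symm
  have haf : a * f = 0 := by rw [ha, mul_assoc, hef, mul_zero]
  have hfa : f * a = 0 := by rw [ha, ← mul_assoc, ← mul_assoc, hfe, zero_mul, zero_mul]
  have hab : a * b₁ = 0 := by rw [← h1, ← mul_assoc, haf, zero_mul]
  have hba : b₁ * a = 0 := by rw [← h2, mul_assoc, hfa, mul_zero]
  have h0 : dbr a b₁ b₂ = 0 := by unfold dbr br; rw [hab, hba]; simp
  have hφ0 : dbr (φ a) b₁ b₂ = 0 := by rw [← hφ, h0, map_zero]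
  rw [corner_dbr f (φ a) b₁ b₂ h1 h2 h3 h4, hφ0, mul_zero, zero_mul]
end

section
/- Let A be a unital associative algebra with a nontrivial idempotent e, f = 1 − e, and φ : A → A a Lie triple centralizer. Then for all a ∈ eAe and all m ∈ eAf: eφ(am)f = eφ(a)e·m − m·fφ(a)f. In particular, the map m ↦ eφ(m)f on eAf satisfies eφ(am)f = a·eφ(m)f for all a ∈ eAe. -/
private lemma keyLem {A : Type*} [Ring A] (e m t : A) (hee : e*e = e)
    (hem : e*m = m) (hme : m*e = 0) :
    e * (dbr t m (1-e)) * (1-e) = (e*t*e)*m - m*((1-e)*t*(1-e)) := by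
  have heex : ∀ x : A, e*(e*x) = e*x := fun x => by rw [← mul_assoc, hee]
  have hemx : ∀ x : A, e*(m*x) = m*x := fun x => by rw [← mul_assoc, hem]
  have hmex : ∀ x : A, m*(e*x) = 0 := fun x => by rw [← mul_assoc, hme, zero_mul]
  simp only [dbr, br, mul_sub, sub_mul, mul_one, one_mul, mul_assoc, hee, hem, hme,
    heex, hemx, hmex, mul_zero, zero_mul, sub_zero, zero_sub, sub_self, mul_neg, neg_mul, neg_neg]
  abel

private lemma brf {A : Type*} [Ring A] (e n : A) (hen : e*n = n) (hne : n*e = 0) :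
    br n (1-e) = n := by
  simp only [br, mul_sub, sub_mul, mul_one, one_mul, hne, hen, sub_zero]
  abel

/-- For a Lie triple centralizer φ, a ∈ eAe and m ∈ eAf:
eφ(am)f = eφ(a)e·m − m·fφ(a)f, and eφ(am)f = a·eφ(m)f. -/
theorem stmt_10 {R A : Type*} [CommRing R] [Ring A] [Algebra R A]
    (e : A) (he : e * e = e) (he0 : e ≠ 0) (he1 : e ≠ 1)
    (f : A) (hf : f = 1 - e)
    (φ : A →ₗ[R] A) (hφ : ∀ x y z : A, φ (dbr x y z) = dbr (φ x) y z) :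
    ∀ a m : A, a = e * a * e → m = e * m * f →
      e * φ (a * m) * f = (e * φ a * e) * m - m * (f * φ a * f) ∧
      e * φ (a * m) * f = a * (e * φ m * f) := by
  subst hf
  intro a m ha hm
  have hfe : (1-e)*e = 0 := by rw [sub_mul, one_mul, he, sub_self]
  have hea : e*a = a := by nth_rewrite 1 [ha]; rw [← mul_assoc, ← mul_assoc, he, ← ha]
  have hae : a*e = a := by nth_rewrite 1 [ha]; rw [mul_assoc, he, ← ha]
  have hem : e*m = m := by nth_rewrite 1 [hm]; rw [← mul_assoc, ← mul_assoc, he, ← hm]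
  have hme : m*e = 0 := by rw [hm, mul_assoc, hfe, mul_zero]
  have hma : m*a = 0 := by rw [ha, ← mul_assoc, ← mul_assoc, hme, zero_mul, zero_mul]
  have heam : e*(a*m) = a*m := by rw [← mul_assoc, hea]
  have hame : (a*m)*e = 0 := by rw [mul_assoc, hme, mul_zero]
  have heex : ∀ x : A, e*(e*x) = e*x := fun x => by rw [← mul_assoc, he]
  have heax : ∀ x : A, e*(a*x) = a*x := fun x => by rw [← mul_assoc, hea]
  have haex : ∀ x : A, a*(e*x) = a*x := fun x => by rw [← mul_assoc, hae]
  have hmex : ∀ x : A, m*(e*x) = 0 := fun x => by rw [← mul_assoc, hme, zero_mul]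
  -- centrality of b = [φ e, a]
  have hdea : ∀ z : A, dbr e a z = 0 := fun z => by simp [dbr, br, hea, hae]
  have hbz : ∀ z : A, (φ e * a - a * φ e) * z = z * (φ e * a - a * φ e) := by
    intro z
    have h := hφ e a z
    rw [hdea z, map_zero] at h
    have h' := h.symm
    simp only [dbr, br] at h'
    exact sub_eq_zero.mp h'
  have hfbf : (1-e) * (φ e * a - a * φ e) * (1-e) = 0 := by
    simp only [mul_sub, sub_mul, mul_one, one_mul, mul_assoc, he, heex, hea, heax, hae, haex,
      sub_self, mul_zero, zero_mul, sub_zero, zero_sub, neg_neg, mul_neg, neg_mul]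
  have hff : (1-e)*(1-e) = (1-e) := by rw [mul_sub, mul_one, sub_mul, one_mul, he]; abel
  have hbf : (φ e * a - a * φ e) * (1-e) = 0 := by
    rw [← hff, ← mul_assoc, hbz (1-e)]
    exact hfbf
  have hbe : (φ e * a - a * φ e) * e = (φ e * a - a * φ e) := by
    have h := hbf
    rw [mul_sub, mul_one, sub_eq_zero] at h
    exact h.symm
  have heb : e * (φ e * a - a * φ e) = (φ e * a - a * φ e) := (hbz e).symm.trans hbe
  have hmb : m * (φ e * a - a * φ e) = 0 := by rw [← heb]; exact hmex _
  have hbm : (φ e * a - a * φ e) * m = 0 := (hbz m).trans hmb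
  -- c commutes with a against m
  have h1 : (e*φ e*e)*a - a*(e*φ e*e) = e*(φ e*a - a*φ e)*e := by
    simp only [mul_sub, sub_mul, mul_assoc, hea, heax, hae, haex, he, heex]
  have h2 : e*(φ e*a - a*φ e)*e = (φ e*a - a*φ e) := by rw [heb, hbe]
  have hcomm : (e*φ e*e)*(a*m) = a*((e*φ e*e)*m) := by
    have h3 : (e*φ e*e)*(a*m) - a*((e*φ e*e)*m) = ((e*φ e*e)*a - a*(e*φ e*e))*m := by
      noncomm_ring
    rw [h1, h2, hbm] at h3
    exact sub_eq_zero.mp h3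
  -- the three dbr computations
  have hd1 : dbr a m (1-e) = a*m := by
    have hb1 : br a m = a*m := by rw [br, hma, sub_zero]
    rw [dbr, hb1]; exact brf e (a*m) heam hame
  have hdm : dbr e m (1-e) = m := by
    have hb2 : br e m = m := by rw [br, hem, hme, sub_zero]
    rw [dbr, hb2]; exact brf e m hem hme
  have hdam : dbr e (a*m) (1-e) = a*m := by
    have hb3 : br e (a*m) = a*m := by rw [br, heam, hame, sub_zero]
    rw [dbr, hb3]; exact brf e (a*m) heam hame
  have E1 : e * φ (a*m) * (1-e) = (e*φ a*e)*m - m*((1-e)*φ a*(1-e)) := by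
    have h := hφ a m (1-e)
    rw [hd1] at h
    rw [h]
    exact keyLem e m (φ a) he hem hme
  have E2 : e * φ m * (1-e) = (e*φ e*e)*m - m*((1-e)*φ e*(1-e)) := by
    have h := hφ e m (1-e)
    rw [hdm] at h
    rw [h]
    exact keyLem e m (φ e) he hem hme
  have E3 : e * φ (a*m) * (1-e) = (e*φ e*e)*(a*m) - (a*m)*((1-e)*φ e*(1-e)) := by
    have h := hφ e (a*m) (1-e)
    rw [hdam] at h
    rw [h]
    exact keyLem e (a*m) (φ e) he heam hame
  refine ⟨E1, ?_⟩
  rw [E3, E2, hcomm, mul_assoc a m, ← mul_sub]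
end

section
/- Let A be a unital associative algebra with a nontrivial idempotent e, f = 1 − e, and φ : A → A a Lie triple centralizer. Then for all m ∈ eAf one has eφ(m)e = 0, fφ(m)f = 0 and fφ(m)e = 0, so φ(m) ∈ eAf. -/
/-- For a Lie triple centralizer φ and m ∈ eAf, all components of φ(m) other than the
eAf-corner vanish, so φ(m) ∈ eAf. -/
theorem stmt_11 {R A : Type*} [CommRing R] [Ring A] [Algebra R A]
    (e : A) (he : e * e = e) (he0 : e ≠ 0) (he1 : e ≠ 1)
    (f : A) (hf : f = 1 - e)
    (φ : A →ₗ[R] A) (hφ : ∀ x y z : A, φ (dbr x y z) = dbr (φ x) y z) :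
    ∀ m : A, m = e * m * f →
      e * φ m * e = 0 ∧ f * φ m * f = 0 ∧ f * φ m * e = 0 ∧ φ m = e * φ m * f := by
  intro m hm
  have hef : e * f = 0 := by rw [hf, mul_sub, mul_one, he, sub_self]
  have hfe : f * e = 0 := by rw [hf, sub_mul, one_mul, he, sub_self]
  have hff : f * f = f := by
    rw [hf, sub_mul, one_mul, mul_sub, mul_one, he]; abel
  have hem : e * m = m := by rw [hm, ← mul_assoc, ← mul_assoc, he]
  have hmf : m * f = m := by
    conv_lhs => rw [hm, mul_assoc, hff]
    exact hm.symm
  have hme : m * e = 0 := by rw [hm, mul_assoc, hfe, mul_zero]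
  have hfm : f * m = 0 := by rw [hm, ← mul_assoc, ← mul_assoc, hfe, zero_mul, zero_mul]
  -- right-associated absorption lemmas
  have he_r : ∀ x : A, e * (e * x) = e * x := fun x => by rw [← mul_assoc, he]
  have fe_r : ∀ x : A, f * (e * x) = 0 := fun x => by rw [← mul_assoc, hfe, zero_mul]
  have fm_r : ∀ x : A, f * (m * x) = 0 := fun x => by rw [← mul_assoc, hfm, zero_mul]
  have me_r : ∀ x : A, m * (e * x) = 0 := fun x => by rw [← mul_assoc, hme, zero_mul]
  have key : dbr m e e = m := by simp [dbr, br, hme, hem]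
  have hA : φ m = (φ m * e - e * φ m) * e - e * (φ m * e - e * φ m) := by
    have h := hφ m e e
    rw [key] at h
    exact h
  have h1 : e * φ m * e = 0 := by
    conv_lhs => rw [hA]
    simp [mul_sub, sub_mul, mul_assoc, he, he_r]
  have h2 : f * φ m * f = 0 := by
    conv_lhs => rw [hA]
    simp [mul_sub, sub_mul, mul_assoc, he, hef, hfe, fe_r]
  have keyB : dbr e m e = -m := by simp [dbr, br, hme, hem]
  have hB : φ m = -((φ e * m - m * φ e) * e - e * (φ e * m - m * φ e)) := by
    have h := hφ e m e
    rw [keyB, map_neg] at h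
    rw [← neg_neg (φ m), h]
    rfl
  have h3 : f * φ m * e = 0 := by
    conv_lhs => rw [hB]
    simp [mul_sub, sub_mul, mul_assoc, mul_neg, neg_mul, he, hme, fe_r, fm_r, me_r]
    simp [sub_mul, add_mul, mul_add, mul_sub, mul_assoc, he, hme, fe_r, fm_r, me_r]
  refine ⟨h1, h2, h3, ?_⟩
  have hte : φ m * e = 0 := by
    have h3' := h3
    rw [hf] at h3'
    have hx : φ m * e - e * φ m * e = 0 := by rw [← h3']; noncomm_ring
    rwa [h1, sub_zero] at hx
  have het : e * φ m = φ m := by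
    have h2' := h2
    rw [hf] at h2'
    have hx : φ m - e * φ m - φ m * e + e * φ m * e = 0 := by rw [← h2']; noncomm_ring
    rw [h1, hte, add_zero, sub_zero] at hx
    exact (sub_eq_zero.mp hx).symm
  rw [hf, mul_sub, mul_one, h1, sub_zero, het]
end

section
/- Let A be a unital associative algebra with a nontrivial idempotent e, f = 1 − e, and φ : A → A a Lie triple centralizer. Then for all m ∈ eAf and n ∈ fAe: eφ(mn)e − eφ(nm)e = eφ(m)f·n and the analogous relation fφ(nm)f − fφ(mn)f = n·eφ(m)f holds. (Here mn ∈ eAe and nm ∈ fAf, and φ(mn), φ(nm) are projected to the respective corners.) -/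
/-- For a Lie triple centralizer φ, m ∈ eAf and n ∈ fAe:
eφ(mn)e − eφ(nm)e = eφ(m)f·n and fφ(nm)f − fφ(mn)f = n·eφ(m)f. -/
theorem stmt_12 {R A : Type*} [CommRing R] [Ring A] [Algebra R A]
    (e : A) (he : e * e = e) (he0 : e ≠ 0) (he1 : e ≠ 1)
    (f : A) (hf : f = 1 - e)
    (φ : A →ₗ[R] A) (hφ : ∀ x y z : A, φ (dbr x y z) = dbr (φ x) y z) :
    ∀ m n : A, m = e * m * f → n = f * n * e →
      e * φ (m * n) * e - e * φ (n * m) * e = (e * φ m * f) * n ∧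
      f * φ (n * m) * f - f * φ (m * n) * f = n * (e * φ m * f) := by
  intro m n hm hn
  have hfe : f * e = 0 := by rw [hf, sub_mul, one_mul, he, sub_self]
  have hef : e * f = 0 := by rw [hf, mul_sub, mul_one, he, sub_self]
  have hff : f * f = f := by rw [hf]; noncomm_ring [he]
  have hme : m * e = 0 := by rw [hm, mul_assoc, hfe, mul_zero]
  have hem : e * m = m := by
    conv_lhs => rw [hm, ← mul_assoc, ← mul_assoc, he]
    exact hm.symm
  have hen : e * n = 0 := by
    conv_lhs => rw [hn, ← mul_assoc, ← mul_assoc, hef, zero_mul, zero_mul]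
  have hne : n * e = n := by
    conv_lhs => rw [hn, mul_assoc, he]
    exact hn.symm
  have hfn : f * n = n := by
    conv_lhs => rw [hn, ← mul_assoc, ← mul_assoc, hff]
    exact hn.symm
  have hnf : n * f = 0 := by
    rw [hn, mul_assoc, hf, mul_sub, mul_one, he, sub_self, mul_zero]
  -- right-associated versions
  have he2 : ∀ x : A, e * (e * x) = e * x := fun x => by rw [← mul_assoc, he]
  have hef2 : ∀ x : A, e * (f * x) = 0 := fun x => by rw [← mul_assoc, hef, zero_mul]
  have hfe2 : ∀ x : A, f * (e * x) = 0 := fun x => by rw [← mul_assoc, hfe, zero_mul]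
  have hff2 : ∀ x : A, f * (f * x) = f * x := fun x => by rw [← mul_assoc, hff]
  have hen2 : ∀ x : A, e * (n * x) = 0 := fun x => by rw [← mul_assoc, hen, zero_mul]
  have hfn2 : ∀ x : A, f * (n * x) = n * x := fun x => by rw [← mul_assoc, hfn]
  have hne2 : ∀ x : A, n * (e * x) = n * x := fun x => by rw [← mul_assoc, hne]
  have hnf2 : ∀ x : A, n * (f * x) = 0 := fun x => by rw [← mul_assoc, hnf, zero_mul]
  have h1 : dbr m e n = n * m - m * n := by
    simp only [dbr, br, hme, hem]
    noncomm_ring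
  have P : φ (n * m) - φ (m * n)
      = (φ m * e - e * φ m) * n - n * (φ m * e - e * φ m) := by
    have h2 := hφ m e n
    rw [h1, map_sub] at h2
    simpa [dbr, br] using h2
  constructor
  · have h3 := congrArg (fun x => e * x * e) P
    simp only [mul_sub, sub_mul, mul_assoc, neg_mul, mul_neg, he, he2, hen, hen2,
      hne, hne2, hef, hef2, hfn, hfn2, mul_zero, zero_mul, sub_zero, zero_sub,
      neg_neg] at h3
    simp only [mul_assoc, hfn]
    rw [← neg_sub, h3, neg_neg]
  · have h3 := congrArg (fun x => f * x * f) P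
    simp only [mul_sub, sub_mul, mul_assoc, neg_mul, mul_neg, hff, hff2, hnf, hnf2,
      hfn, hfn2, hfe, hfe2, hne, hne2, mul_zero, zero_mul, sub_zero, zero_sub,
      neg_neg] at h3
    simp only [mul_assoc, hne2]
    rw [h3]
    simp [hef]
end

section
/- Let T = Tri(A, M, B) be a unital triangular algebra with M a faithful (A,B)-bimodule, and suppose φ : T → T is a Lie triple centralizer. Let α₄(a) denote the B-component of φ(diag(a,0)). Then M·α₄([[a₁,a₂],a₃]) = 0, and hence α₄([[a₁,a₂],a₃]) = 0 for all a₁,a₂,a₃ ∈ A. -/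
/-- In a unital triangular algebra T = Tri(A,M,B) (presented internally, M = eTf faithful),
for a Lie triple centralizer φ the map α₄(a) = fφ(eae)f kills all double commutators of
A = eTe: M·α₄([[a₁,a₂],a₃]) = 0 and hence α₄([[a₁,a₂],a₃]) = 0. -/
theorem stmt_14 {R T : Type*} [CommRing R] [Ring T] [Algebra R T]
    (e : T) (he : e * e = e) (he0 : e ≠ 0) (he1 : e ≠ 1)
    (f : T) (hf : f = 1 - e)
    (htri : ∀ x : T, f * x * e = 0)
    (hfaithA : ∀ a : T, a = e * a * e → (∀ m : T, a * (e * m * f) = 0) → a = 0)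
    (hfaithB : ∀ b : T, b = f * b * f → (∀ m : T, (e * m * f) * b = 0) → b = 0)
    (φ : T →ₗ[R] T) (hφ : ∀ x y z : T, φ (dbr x y z) = dbr (φ x) y z) :
    ∀ a₁ a₂ a₃ : T, a₁ = e * a₁ * e → a₂ = e * a₂ * e → a₃ = e * a₃ * e →
      (∀ m : T, (e * m * f) * (f * φ (dbr a₁ a₂ a₃) * f) = 0) ∧
      f * φ (dbr a₁ a₂ a₃) * f = 0 := by
  intro a₁ a₂ a₃ h1 h2 h3
  have hfe : f * e = 0 := by rw [hf, sub_mul, one_mul, he, sub_self]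
  have hef : e * f = 0 := by rw [hf, mul_sub, mul_one, he, sub_self]
  have hfa : f * a₃ = 0 := by rw [h3, ← mul_assoc, ← mul_assoc, hfe, zero_mul, zero_mul]
  have haf : a₃ * f = 0 := by rw [h3, mul_assoc, hef, mul_zero]
  have key : f * φ (dbr a₁ a₂ a₃) * f = 0 := by
    rw [hφ]
    have hfa' : ∀ x : T, f * (a₃ * x) = 0 := fun x => by rw [← mul_assoc, hfa, zero_mul]
    simp only [dbr, br, mul_sub, sub_mul, mul_assoc, haf, hfa, hfa', mul_zero, zero_mul,
      sub_zero, zero_sub, neg_zero, sub_self]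
  exact ⟨fun m => by rw [key, mul_zero], key⟩
end

section
/- Let A be a unital associative algebra with nontrivial idempotent e, f = 1−e, and φ : A → A a Lie triple centralizer. Define β₁(b) = eφ(fbf)e for b ∈ fAf. Then [[β₁(b), a₁], a₂] = 0 for all a₁, a₂ ∈ eAe and b ∈ fAf, i.e. β₁ maps fAf into the commutant of [eAe, eAe] inside eAe. -/
lemma conj_dbr {A : Type*} [Ring A] (e x a₁ a₂ : A) (he : e * e = e) :
    dbr (e * x * e) (e * a₁ * e) (e * a₂ * e)
      = e * dbr x (e * a₁ * e) (e * a₂ * e) * e := by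
  have hee : ∀ y : A, e * (e * y) = e * y := by
    intro y; rw [← mul_assoc, he]
  simp only [dbr, br, mul_sub, sub_mul, mul_assoc, hee, he]

/-- For a Lie triple centralizer φ, with β₁(b) = eφ(fbf)e, one has
[[β₁(b), a₁], a₂] = 0 for all a₁, a₂ ∈ eAe and b ∈ fAf. -/
theorem stmt_18 {R A : Type*} [CommRing R] [Ring A] [Algebra R A]
    (e : A) (he : e * e = e) (he0 : e ≠ 0) (he1 : e ≠ 1)
    (f : A) (hf : f = 1 - e)
    (φ : A →ₗ[R] A) (hφ : ∀ x y z : A, φ (dbr x y z) = dbr (φ x) y z) :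
    ∀ b a₁ a₂ : A, a₁ = e * a₁ * e → a₂ = e * a₂ * e →
      dbr (e * φ (f * b * f) * e) a₁ a₂ = 0 := by
  intro b a₁ a₂ ha₁ ha₂
  have hef : ∀ y : A, e * (f * y) = 0 := by
    intro y; rw [← mul_assoc, hf, mul_sub, mul_one, he, sub_self, zero_mul]
  have hfe : ∀ y : A, f * (e * y) = 0 := by
    intro y; rw [← mul_assoc, hf, sub_mul, one_mul, he, sub_self, zero_mul]
  have hzero : dbr (f * b * f) (e * a₁ * e) (e * a₂ * e) = 0 := by
    have h1 : f * b * f * (e * a₁ * e) = 0 := by simp [mul_assoc, hfe]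
    have h2 : (e * a₁ * e) * (f * b * f) = 0 := by simp [mul_assoc, hef]
    have h3 : f * b * f * (e * a₂ * e) = 0 := by simp [mul_assoc, hfe]
    have h4 : (e * a₂ * e) * (f * b * f) = 0 := by simp [mul_assoc, hef]
    simp [dbr, br, h1, h2, h3, h4]
  have key : dbr (φ (f * b * f)) (e * a₁ * e) (e * a₂ * e) = 0 := by
    rw [← hφ, hzero, map_zero]
  rw [ha₁, ha₂, conj_dbr _ _ _ _ he, key, mul_zero, zero_mul]
end
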